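/- Let C ⊆ {0,1,2}^n be a trifferent code in which each codeword has exactly two 2's, and let G be the graph on vertex set [n] with an edge {i,j} whenever some codeword has its two 2's at positions i and j. Then G contains no copy of K_{3,9}, i.e., there do not exist distinct vertices i_1, i_2, i_3 and distinct vertices j_1, ..., j_9 (disjoint from the i's) such that every pair {i_k, j_ℓ} is an edge of G. -/
import Mathlib


def Trifferent {n : ℕ} (C : Finset (Fin n → Fin 3)) : Prop :=
  ∀ x ∈ C, ∀ y ∈ C, ∀ z ∈ C, x ≠ y → x ≠ z → y ≠ z →
    ∃ i : Fin n, ({x i, y i, z i} : Set (Fin 3)) = Set.univ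

/-- The graph associated to a 2-bounded trifferent code: `i ~ j` iff some
codeword has its two `2`s at positions `i` and `j`. -/
def CodeAdj {n : ℕ} (C : Finset (Fin n → Fin 3)) (i j : Fin n) : Prop :=
  i ≠ j ∧ ∃ x ∈ C, x i = 2 ∧ x j = 2

lemma fin3_two_eq (p q r : Fin 3) (h : p = q ∨ p = r ∨ q = r) :
    ({p, q, r} : Set (Fin 3)) ≠ Set.univ := by
  intro he
  rw [Set.eq_univ_iff_forall] at he
  have h0 := he 0
  have h1 := he 1
  have h2 := he 2
  simp only [Set.mem_insert_iff, Set.mem_singleton_iff] at h0 h1 h2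
  fin_cases p <;> fin_cases q <;> fin_cases r <;> simp_all <;>
    first
      | exact absurd (he 0) (by decide)
      | exact absurd (he 1) (by decide)
      | exact absurd (he 2) (by decide)

lemma fin3_ne2 (p q r : Fin 3) (hp : p ≠ 2) (hq : q ≠ 2) (hr : r ≠ 2) :
    p = q ∨ p = r ∨ q = r := by
  fin_cases p <;> fin_cases q <;> fin_cases r <;> simp_all

lemma fin3_eq_of_ne (p q r : Fin 3) (hp : p ≠ 2) (hq : q ≠ 2) (hr : r ≠ 2)
    (h1 : p ≠ q) (h2 : r ≠ q) : p = r := by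
  fin_cases p <;> fin_cases q <;> fin_cases r <;> simp_all

lemma fin3_mem01 (v : Fin 3) (h : v ≠ 2) : v ∈ ({0, 1} : Finset (Fin 3)) := by
  fin_cases v <;> simp_all

theorem code_graph_K39_free {n : ℕ} (C : Finset (Fin n → Fin 3))
    (hC : Trifferent C)
    (h2 : ∀ x ∈ C, (Finset.univ.filter fun i => x i = 2).card = 2) :
    ¬ ∃ (a : Fin 3 → Fin n) (b : Fin 9 → Fin n),
        Function.Injective a ∧ Function.Injective b ∧
        (∀ k ℓ, a k ≠ b ℓ) ∧
        ∀ k ℓ, CodeAdj C (a k) (b ℓ) := by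
  classical
  rintro ⟨a, b, ha, hb, hab, hadj⟩
  -- For each k, ℓ choose a codeword with 2s exactly at a k and b ℓ
  have hx : ∀ (k : Fin 3) (ℓ : Fin 9),
      ∃ x, x ∈ C ∧ ∀ i, (x i = 2 ↔ i = a k ∨ i = b ℓ) := by
    intro k ℓ
    obtain ⟨-, x, hxC, hx1, hx2⟩ := hadj k ℓ
    refine ⟨x, hxC, ?_⟩
    have hsub : ({a k, b ℓ} : Finset (Fin n)) ⊆
        Finset.univ.filter fun i => x i = 2 := by
      intro i hi
      simp only [Finset.mem_insert, Finset.mem_singleton] at hi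
      simp only [Finset.mem_filter, Finset.mem_univ, true_and]
      rcases hi with h | h <;> subst h <;> assumption
    have hcard : ({a k, b ℓ} : Finset (Fin n)).card = 2 := by
      rw [Finset.card_insert_of_notMem (by simp [hab k ℓ]), Finset.card_singleton]
    have heq : ({a k, b ℓ} : Finset (Fin n)) =
        Finset.univ.filter fun i => x i = 2 :=
      Finset.eq_of_subset_of_card_le hsub (by rw [h2 x hxC, hcard])
    intro i
    constructor
    · intro h
      have : i ∈ ({a k, b ℓ} : Finset (Fin n)) := by
        rw [heq]; simp [h]
      simpa using this
    · intro h
      have : i ∈ ({a k, b ℓ} : Finset (Fin n)) := by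
        simp only [Finset.mem_insert, Finset.mem_singleton]; exact h
      rw [heq] at this
      simpa using this
  choose y hyC hy2 using hx
  have hne2 : ∀ (k : Fin 3) (ℓ : Fin 9) (i : Fin n),
      i ≠ a k → i ≠ b ℓ → y k ℓ i ≠ 2 := by
    intro k ℓ i h1 h2' h
    rcases (hy2 k ℓ i).mp h with h' | h'
    · exact h1 h'
    · exact h2' h'
  -- key triple argument
  have key : ∀ (k k' : Fin 3) (ℓ ℓ' : Fin 9), k ≠ k' → ℓ ≠ ℓ' →
      y k' ℓ (a k) = y k' ℓ' (a k) → y k ℓ (b ℓ') = y k' ℓ (b ℓ') → False := by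
    intro k k' ℓ ℓ' hk hl hA hB
    have huak : y k ℓ (a k) = 2 := (hy2 k ℓ (a k)).mpr (Or.inl rfl)
    have hvak : y k' ℓ (a k) ≠ 2 :=
      hne2 k' ℓ (a k) (fun h => hk (ha h)) (hab k ℓ)
    have hwak : y k' ℓ' (a k) ≠ 2 :=
      hne2 k' ℓ' (a k) (fun h => hk (ha h)) (hab k ℓ')
    have hvbl : y k' ℓ (b ℓ) = 2 := (hy2 k' ℓ (b ℓ)).mpr (Or.inr rfl)
    have hwbl : y k' ℓ' (b ℓ) ≠ 2 :=
      hne2 k' ℓ' (b ℓ) (fun h => (hab k' ℓ) h.symm) (fun h => hl (hb h))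
    have huv : y k ℓ ≠ y k' ℓ := fun h => hvak (by rw [← congrFun h (a k)]; exact huak)
    have huw : y k ℓ ≠ y k' ℓ' := fun h => hwak (by rw [← congrFun h (a k)]; exact huak)
    have hvw : y k' ℓ ≠ y k' ℓ' := fun h => hwbl (by rw [← congrFun h (b ℓ)]; exact hvbl)
    obtain ⟨i, hi⟩ := hC _ (hyC k ℓ) _ (hyC k' ℓ) _ (hyC k' ℓ') huv huw hvw
    have h2mem : (2 : Fin 3) ∈ ({y k ℓ i, y k' ℓ i, y k' ℓ' i} : Set (Fin 3)) := by
      rw [hi]; exact Set.mem_univ _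
    simp only [Set.mem_insert_iff, Set.mem_singleton_iff] at h2mem
    rcases h2mem with h | h | h
    · rcases (hy2 k ℓ i).mp h.symm with h' | h'
      · subst h'
        exact fin3_two_eq _ _ _ (Or.inr (Or.inr hA)) hi
      · subst h'
        have : y k' ℓ (b ℓ) = 2 := hvbl
        exact fin3_two_eq _ _ _ (Or.inl (h.symm.trans this.symm)) hi
    · rcases (hy2 k' ℓ i).mp h.symm with h' | h'
      · subst h'
        have hw2 : y k' ℓ' (a k') = 2 := (hy2 k' ℓ' (a k')).mpr (Or.inl rfl)
        exact fin3_two_eq _ _ _ (Or.inr (Or.inr (h.symm.trans hw2.symm))) hi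
      · subst h'
        have hu2 : y k ℓ (b ℓ) = 2 := (hy2 k ℓ (b ℓ)).mpr (Or.inr rfl)
        exact fin3_two_eq _ _ _ (Or.inl (hu2.trans h)) hi
    · rcases (hy2 k' ℓ' i).mp h.symm with h' | h'
      · subst h'
        have hv2 : y k' ℓ (a k') = 2 := (hy2 k' ℓ (a k')).mpr (Or.inl rfl)
        exact fin3_two_eq _ _ _ (Or.inr (Or.inr (hv2.trans h))) hi
      · subst h'
        exact fin3_two_eq _ _ _ (Or.inl hB) hi
  -- pigeonhole 1
  have h01 : (0 : Fin 3) ≠ 1 := by decide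
  have h21 : (2 : Fin 3) ≠ 1 := by decide
  have h02 : (0 : Fin 3) ≠ 2 := by decide
  set f : Fin 9 → Fin 3 × Fin 3 := fun ℓ => (y 1 ℓ (a 0), y 1 ℓ (a 2)) with hfdef
  have hmaps : ∀ ℓ ∈ (Finset.univ : Finset (Fin 9)),
      f ℓ ∈ (({0, 1} : Finset (Fin 3)) ×ˢ ({0, 1} : Finset (Fin 3))) := by
    intro ℓ _
    rw [Finset.mem_product]
    constructor
    · exact fin3_mem01 _ (hne2 1 ℓ (a 0) (fun h => h01 (ha h)) (hab 0 ℓ))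
    · exact fin3_mem01 _ (hne2 1 ℓ (a 2) (fun h => h21 (ha h)) (hab 2 ℓ))
  obtain ⟨p, -, hcard⟩ :=
    Finset.exists_lt_card_fiber_of_mul_lt_card_of_maps_to (n := 2) hmaps (by decide)
  rw [Finset.two_lt_card_iff] at hcard
  obtain ⟨ℓ1, ℓ2, ℓ3, hm1, hm2, hm3, h12, h13, h23⟩ := hcard
  simp only [Finset.mem_filter, Finset.mem_univ, true_and] at hm1 hm2 hm3
  have heqf : ∀ ℓ ℓ' : Fin 9, f ℓ = p → f ℓ' = p →
      y 1 ℓ (a 0) = y 1 ℓ' (a 0) ∧ y 1 ℓ (a 2) = y 1 ℓ' (a 2) := by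
    intro ℓ ℓ' e e'
    have : f ℓ = f ℓ' := e.trans e'.symm
    exact ⟨congrArg Prod.fst this, congrArg Prod.snd this⟩
  -- for pairs in the fiber, the 0- and 2-words agree at b ℓ'
  have main2 : ∀ ℓ ℓ' : Fin 9, ℓ ≠ ℓ' → f ℓ = p → f ℓ' = p →
      y 0 ℓ (b ℓ') = y 2 ℓ (b ℓ') := by
    intro ℓ ℓ' hne e e'
    obtain ⟨e0, e2⟩ := heqf ℓ ℓ' e e'
    have hp0 : y 0 ℓ (b ℓ') ≠ y 1 ℓ (b ℓ') :=
      fun h => key 0 1 ℓ ℓ' (by decide) hne e0 h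
    have hp2 : y 2 ℓ (b ℓ') ≠ y 1 ℓ (b ℓ') :=
      fun h => key 2 1 ℓ ℓ' (by decide) hne e2 h
    exact fin3_eq_of_ne _ _ _
      (hne2 0 ℓ (b ℓ') (fun h => hab 0 ℓ' h.symm) (fun h => hne (hb h).symm))
      (hne2 1 ℓ (b ℓ') (fun h => hab 1 ℓ' h.symm) (fun h => hne (hb h).symm))
      (hne2 2 ℓ (b ℓ') (fun h => hab 2 ℓ' h.symm) (fun h => hne (hb h).symm))
      hp0 hp2
  -- pigeonhole 2 on the values of y 2 ℓᵢ (a 0)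
  have hv1 : y 2 ℓ1 (a 0) ≠ 2 := hne2 2 ℓ1 (a 0) (fun h => h02 (ha h)) (hab 0 ℓ1)
  have hv2 : y 2 ℓ2 (a 0) ≠ 2 := hne2 2 ℓ2 (a 0) (fun h => h02 (ha h)) (hab 0 ℓ2)
  have hv3 : y 2 ℓ3 (a 0) ≠ 2 := hne2 2 ℓ3 (a 0) (fun h => h02 (ha h)) (hab 0 ℓ3)
  rcases fin3_ne2 _ _ _ hv1 hv2 hv3 with h | h | h
  · exact key 0 2 ℓ1 ℓ2 (by decide) h12 h (main2 ℓ1 ℓ2 h12 hm1 hm2)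
  · exact key 0 2 ℓ1 ℓ3 (by decide) h13 h (main2 ℓ1 ℓ3 h13 hm1 hm3)
  · exact key 0 2 ℓ2 ℓ3 (by decide) h23 h (main2 ℓ2 ℓ3 h23 hm2 hm3)
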